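/- arXiv:1810.08792 — 3 statements merged into one kernel-verified Lean document; each statement's English description precedes it below -/
import Mathlib

section
/- Fix integers d ≥ 2, b ≥ 3, a set A ⊆ {0,...,b−1}, and 1 ≤ m ≤ d, and let N = Σ_{i=0}^{m−1} C(d−1, i)·|A|^i·(b−|A|)^{d−i−1}. Then the number of vertices of the complete-lines subgraph C_k of Γ_k(d,b,A,m) satisfies |C_k| ≍ (N·b)^k: there exist constants c, C > 0 (depending on d, b, A, m but not on k) with c·(Nb)^k ≤ |C_k| ≤ C·(Nb)^k for all k. -/
/-!
The line through `x` in direction `i₀` is complete iff in every digit position fewer than `m`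
of the other coordinates have their digit in `A`: it meets the points `a * b ^ j` with `a ∈ A`.
These conditions are independent across digit positions, so base-`b` expansion turns the set of
such `x` into a `k`-fold product of a set of admissible digit columns, of which there are
`N * b` (`N` choices for the other `d - 1` digits, `b` for the `i₀`-th). Hence `C_k` is a union
of `d` sets of size exactly `(N * b) ^ k`, and `(N * b) ^ k ≤ |C_k| ≤ d * (N * b) ^ k`.
-/

open scoped Classical

/-- Reachability within the subgraph of `X` induced on a vertex set `s`. -/
def SimpleGraph.ReachIn {V : Type*} (X : SimpleGraph V) (s : Set V) (v w : V) : Prop :=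
  ∃ (hv : v ∈ s) (hw : w ∈ s), (X.induce s).Reachable ⟨v, hv⟩ ⟨w, hw⟩

/-- The vertex set of the connected component of `v` in the subgraph of `X` induced on `s`
(empty if `v ∉ s`). -/
def SimpleGraph.compIn {V : Type*} (X : SimpleGraph V) (s : Set V) (v : V) : Set V :=
  {w | X.ReachIn s v w}

/-- `T` is a vertex set witnessing `cut¹ᐟ²` for the subgraph of `X` induced on the finite
vertex set `G`: after removing `T` from `G`, every connected component has at most
`|G|/2` vertices. -/
def IsHalfCutSet {V : Type*} (X : SimpleGraph V) (G T : Finset V) : Prop :=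
  T ⊆ G ∧ ∀ v : V, 2 * (X.compIn (↑(G \ T)) v).ncard ≤ G.card

/-- `cut¹ᐟ²` of the subgraph of `X` induced on the finite vertex set `G`: the least size of
a vertex set whose removal leaves all connected components of size at most `|G|/2`. -/
noncomputable def cutHalf {V : Type*} (X : SimpleGraph V) (G : Finset V) : ℕ :=
  sInf {t | ∃ T : Finset V, IsHalfCutSet X G T ∧ T.card = t}

/-- The `1/2`-separation profile of `X`, over finite subgraphs with vertex set inside `W`. -/
noncomputable def sepHalf {V : Type*} (X : SimpleGraph V) (W : Set V) (n : ℕ) : ℕ :=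
  sSup {c | ∃ G : Finset V, ↑G ⊆ W ∧ G.card ≤ n ∧ c = cutHalf X G}

/-- The `i`-th digit of `x` in base `b`. -/
def digit (b i x : ℕ) : ℕ := x / b ^ i % b

/-- Membership in the vertex set `V_k` of `Γ_k(d,b,A,m)`: all coordinates lie in `[0, b^k)`
and at every digit position `j < k`, at most `m` coordinates have their `j`-th base-`b`
digit in `A`. -/
def GenMem (d b : ℕ) (A : Finset ℕ) (m k : ℕ) (x : Fin d → ℕ) : Prop :=
  (∀ i, x i < b ^ k) ∧
    ∀ j < k, (Finset.univ.filter fun i : Fin d => digit b j (x i) ∈ A).card ≤ m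

/-- The vertex set of `S(d,b,A,m) = ⋃ₖ Γ_k(d,b,A,m)`. -/
def GenS (d b : ℕ) (A : Finset ℕ) (m : ℕ) : Set (Fin d → ℕ) :=
  {x | ∃ k, GenMem d b A m k x}

/-- The infinite graph `S(d,b,A,m)`, with edges between valid points at `ℓ¹`-distance 1. -/
def GenGraph (d b : ℕ) (A : Finset ℕ) (m : ℕ) : SimpleGraph (Fin d → ℕ) where
  Adj x y := x ∈ GenS d b A m ∧ y ∈ GenS d b A m ∧ (∑ i, |(x i : ℤ) - y i|) = 1
  symm := by
    constructor
    rintro x y ⟨hx, hy, h⟩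
    refine ⟨hy, hx, ?_⟩
    rw [← h]
    exact Finset.sum_congr rfl fun i _ => abs_sub_comm _ _
  loopless := by constructor; rintro x ⟨-, -, h⟩; simp at h

/-- The vertex set of `Γ_k(d,b,A,m)`. -/
noncomputable def GenGammaV (d b : ℕ) (A : Finset ℕ) (m k : ℕ) : Finset (Fin d → ℕ) :=
  (Fintype.piFinset fun _ : Fin d => Finset.range (b ^ k)).filter (GenMem d b A m k)

/-- The full line of length `b^k` through `x` in coordinate direction `i` is entirely
contained in `Γ_k(d,b,A,m)`. -/
def GenLineComplete (d b : ℕ) (A : Finset ℕ) (m k : ℕ) (i : Fin d) (x : Fin d → ℕ) : Prop :=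
  ∀ t < b ^ k, GenMem d b A m k (Function.update x i t)

/-- The set of points of the full line of length `b^k` through `x` in direction `i`. -/
def GenLineSet (d b k : ℕ) (i : Fin d) (x : Fin d → ℕ) : Set (Fin d → ℕ) :=
  {y | ∃ t < b ^ k, y = Function.update x i t}

/-- The vertex set of the complete-lines subgraph `C_k` of `Γ_k(d,b,A,m)`. -/
noncomputable def GenCkV (d b : ℕ) (A : Finset ℕ) (m k : ℕ) : Finset (Fin d → ℕ) :=
  (GenGammaV d b A m k).filter fun x => ∃ i : Fin d, GenLineComplete d b A m k i x

/-- `N`, the number of single-column digit configurations of `d-1` coordinates with at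
most `m-1` digits in `A`. -/
def genN (d b : ℕ) (A : Finset ℕ) (m : ℕ) : ℕ :=
  ∑ i ∈ Finset.range m, (d - 1).choose i * A.card ^ i * (b - A.card) ^ (d - i - 1)


open Finset

lemma sum_digit_mul_pow {b k x : ℕ} (hx : x < b ^ k) :
    ∑ j : Fin k, digit b j x * b ^ (j : ℕ) = x := by
  have h := congrArg Fin.val (finFunctionFinEquiv.apply_symm_apply (⟨x, hx⟩ : Fin (b ^ k)))
  rwa [finFunctionFinEquiv_apply] at h

lemma sum_mul_pow_lt {b k : ℕ} {c : Fin k → ℕ} (hc : ∀ j, c j < b) :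
    ∑ j, c j * b ^ (j : ℕ) < b ^ k :=
  (finFunctionFinEquiv fun j => (⟨c j, hc j⟩ : Fin b)).isLt

lemma digit_sum_mul_pow {b k : ℕ} {c : Fin k → ℕ} (hc : ∀ j, c j < b) (j : Fin k) :
    digit b j (∑ j, c j * b ^ (j : ℕ)) = c j := by
  have h := congrArg Fin.val
    (congrFun (finFunctionFinEquiv.symm_apply_apply fun j => (⟨c j, hc j⟩ : Fin b)) j)
  rwa [finFunctionFinEquiv_symm_apply_val, finFunctionFinEquiv_apply] at h

lemma digit_lt {b : ℕ} (hb : 0 < b) (j x : ℕ) : digit b j x < b :=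
  Nat.mod_lt _ hb

lemma digit_mul_pow_self {b a : ℕ} (ha : a < b) (j : ℕ) : digit b j (a * b ^ j) = a := by
  rw [digit, Nat.mul_div_cancel _ (pow_pos (a.zero_le.trans_lt ha) j), Nat.mod_eq_of_lt ha]

theorem card_filter_forall_digit_mem {ι : Type*} [Fintype ι] [DecidableEq ι] {b : ℕ}
    (S : Finset (ι → ℕ)) (hS : S ⊆ Fintype.piFinset fun _ => range b) (k : ℕ) :
    #{x ∈ Fintype.piFinset fun _ : ι => range (b ^ k) |
      ∀ j < k, (fun i => digit b j (x i)) ∈ S} = #S ^ k := by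
  have hlt : ∀ c ∈ S, ∀ i, c i < b := fun c hc i => by
    simpa using Fintype.mem_piFinset.mp (hS hc) i
  rw [← Fintype.card_piFinset_const S k]
  refine card_nbij' (fun x (j : Fin k) i => digit b j (x i))
    (fun c i => ∑ j, c j i * b ^ (j : ℕ)) (fun x hx => ?_) (fun c hc => ?_) (fun x hx => ?_)
    (fun c hc => ?_)
  all_goals simp only [mem_coe, mem_filter, Fintype.mem_piFinset, mem_range] at *
  · exact fun j => hx.2 j j.isLt
  · refine ⟨fun i => sum_mul_pow_lt fun j => hlt _ (hc j) i, fun j hj => ?_⟩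
    convert hc ⟨j, hj⟩ using 2 with i
    exact digit_sum_mul_pow (fun j => hlt _ (hc j) i) ⟨j, hj⟩
  · funext i
    exact sum_digit_mul_pow (hx.1 i)
  · funext j i
    exact digit_sum_mul_pow (fun j => hlt _ (hc j) i) j

section CountingMembers

variable {ι α : Type*} [Fintype ι] [DecidableEq ι] [DecidableEq α] {A B : Finset α}

lemma filter_piFinset_mem_eq (hAB : A ⊆ B) (s : Finset ι) :
    {f ∈ Fintype.piFinset fun _ : ι => B | univ.filter (fun i => f i ∈ A) = s} =
      Fintype.piFinset fun i => if i ∈ s then A else B \ A := by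
  ext f
  simp only [mem_filter, Fintype.mem_piFinset, Finset.ext_iff, mem_univ, true_and]
  constructor
  · rintro ⟨hB, hs⟩ i
    split_ifs with hi
    · exact (hs i).2 hi
    · exact mem_sdiff.2 ⟨hB i, fun hA => hi ((hs i).1 hA)⟩
  · intro h
    refine ⟨fun i => ?_, fun i => ⟨fun hA => ?_, fun hi => ?_⟩⟩
    · have := h i
      split_ifs at this
      exacts [hAB this, (mem_sdiff.1 this).1]
    · by_contra hi
      simpa [hi, hA] using h i
    · simpa [hi] using h i

lemma card_filter_piFinset_mem_eq (hAB : A ⊆ B) (s : Finset ι) :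
    #{f ∈ Fintype.piFinset fun _ : ι => B | univ.filter (fun i => f i ∈ A) = s} =
      #A ^ #s * #(B \ A) ^ (Fintype.card ι - #s) := by
  rw [filter_piFinset_mem_eq hAB, Fintype.card_piFinset, prod_apply_ite, prod_const, prod_const,
    filter_mem_eq_inter, univ_inter, filter_not, filter_mem_eq_inter, univ_inter,
    card_univ_sdiff]

lemma card_filter_piFinset_card_eq (hAB : A ⊆ B) (j : ℕ) :
    #{f ∈ Fintype.piFinset fun _ : ι => B | #{i | f i ∈ A} = j} =
      (Fintype.card ι).choose j * #A ^ j * #(B \ A) ^ (Fintype.card ι - j) := by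
  have hmaps : ∀ f ∈ {f ∈ Fintype.piFinset fun _ : ι => B | #{i | f i ∈ A} = j},
      univ.filter (fun i => f i ∈ A) ∈ powersetCard j univ :=
    fun f hf => mem_powersetCard_univ.2 (mem_filter.1 hf).2
  have hfiber : ∀ s ∈ powersetCard j (univ : Finset ι),
      #{f ∈ {f ∈ Fintype.piFinset fun _ : ι => B | #{i | f i ∈ A} = j} |
        univ.filter (fun i => f i ∈ A) = s} = #A ^ j * #(B \ A) ^ (Fintype.card ι - j) := by
    intro s hs
    rw [← (mem_powersetCard_univ.1 hs), ← card_filter_piFinset_mem_eq hAB, filter_filter]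
    exact congrArg card (filter_congr fun f _ => and_iff_right_of_imp fun h => h ▸ rfl)
  rw [card_eq_sum_card_fiberwise hmaps, sum_congr rfl hfiber, sum_const, card_powersetCard,
    card_univ, smul_eq_mul, mul_assoc]

lemma card_filter_piFinset_card_lt (hAB : A ⊆ B) (m : ℕ) :
    #{f ∈ Fintype.piFinset fun _ : ι => B | #{i | f i ∈ A} < m} =
      ∑ j ∈ range m, (Fintype.card ι).choose j * #A ^ j * #(B \ A) ^ (Fintype.card ι - j) := by
  have hmaps : ∀ f ∈ {f ∈ Fintype.piFinset fun _ : ι => B | #{i | f i ∈ A} < m},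
      #{i | f i ∈ A} ∈ range m :=
    fun f hf => mem_range.2 (mem_filter.1 hf).2
  rw [card_eq_sum_card_fiberwise hmaps]
  refine sum_congr rfl fun j hj => ?_
  rw [← card_filter_piFinset_card_eq hAB, filter_filter]
  exact congrArg card (filter_congr fun f _ =>
    and_iff_right_of_imp fun h => h ▸ mem_range.1 hj)

end CountingMembers

lemma card_filter_ne_and {ι : Type*} [Fintype ι] [DecidableEq ι] (p : ι → Prop)
    [DecidablePred p] (i₀ : ι) :
    #{i : {i // i ≠ i₀} | p i} = #{i | i ≠ i₀ ∧ p i} := by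
  rw [← Fintype.card_subtype, ← Fintype.card_subtype,
    Fintype.card_congr (Equiv.subtypeSubtypeEquivSubtypeInter (· ≠ i₀) p)]

lemma card_filter_update {ι β : Type*} [Fintype ι] [DecidableEq ι] (p : β → Prop)
    [DecidablePred p] (f : ι → β) (i₀ : ι) (t : β) :
    #{i | p (Function.update f i₀ t i)} = #{i | i ≠ i₀ ∧ p (f i)} + if p t then 1 else 0 := by
  rw [card_filter, card_filter, ← add_sum_erase _ _ (mem_univ i₀),
    ← add_sum_erase _ _ (mem_univ i₀)]
  simp only [Function.update_self, ne_eq, not_true_eq_false, false_and, if_false, zero_add]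
  rw [add_comm]
  exact congrArg (· + _) (sum_congr rfl fun i hi => by simp [ne_of_mem_erase hi])

noncomputable def lineColumns (d b : ℕ) (A : Finset ℕ) (m : ℕ) (i₀ : Fin d) :
    Finset (Fin d → ℕ) :=
  {c ∈ Fintype.piFinset fun _ => range b | #{i | i ≠ i₀ ∧ c i ∈ A} < m}

lemma card_lineColumns {d b m : ℕ} {A : Finset ℕ} (hA : A ⊆ range b) (i₀ : Fin d) :
    #(lineColumns d b A m i₀) = genN d b A m * b := by
  rw [card_equiv (Equiv.funSplitAt i₀ ℕ) (t := range b ×ˢ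
    {f ∈ Fintype.piFinset fun _ : {i // i ≠ i₀} => range b | #{i | f i ∈ A} < m}) ?_]
  · have hcard : Fintype.card {i // i ≠ i₀} = d - 1 := by simp
    rw [card_product, card_filter_piFinset_card_lt hA, card_range, mul_comm, genN,
      card_sdiff_of_subset hA, card_range, hcard]
    exact congrArg (· * b) (sum_congr rfl fun j _ => by rw [Nat.sub_right_comm])
  · intro c
    simp only [lineColumns, mem_filter, Fintype.mem_piFinset, mem_product,
      Equiv.funSplitAt_apply, mem_range]
    rw [card_filter_ne_and (fun i => c i ∈ A), ← and_assoc]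
    refine and_congr_left' ⟨fun h => ⟨h i₀, fun i => h i⟩, fun h i => ?_⟩
    by_cases hi : i = i₀
    exacts [hi ▸ h.1, h.2 ⟨i, hi⟩]

noncomputable def completeLinePoints (d b : ℕ) (A : Finset ℕ) (m k : ℕ) (i₀ : Fin d) :
    Finset (Fin d → ℕ) :=
  {x ∈ Fintype.piFinset fun _ => range (b ^ k) |
    ∀ j < k, (fun i => digit b j (x i)) ∈ lineColumns d b A m i₀}

lemma card_completeLinePoints {d b m : ℕ} {A : Finset ℕ} (hA : A ⊆ range b) (k : ℕ)
    (i₀ : Fin d) : #(completeLinePoints d b A m k i₀) = (genN d b A m * b) ^ k := by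
  rw [completeLinePoints,
    card_filter_forall_digit_mem (lineColumns d b A m i₀) (filter_subset _ _), card_lineColumns hA]

lemma genLineComplete_iff {d b m k : ℕ} {A : Finset ℕ} (hA : A ⊆ range b) (hm : 0 < m)
    {i₀ : Fin d} {x : Fin d → ℕ} (hx : ∀ i, x i < b ^ k) :
    GenLineComplete d b A m k i₀ x ↔ ∀ j < k, #{i | i ≠ i₀ ∧ digit b j (x i) ∈ A} < m := by
  have hcount : ∀ t j, #{i | digit b j (Function.update x i₀ t i) ∈ A} =
      #{i | i ≠ i₀ ∧ digit b j (x i) ∈ A} + if digit b j t ∈ A then 1 else 0 :=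
    fun t j => card_filter_update (fun y => digit b j y ∈ A) x i₀ t
  constructor
  · intro hline j hj
    rcases A.eq_empty_or_nonempty with rfl | ⟨a, ha⟩
    · simpa using hm
    have hab : a < b := mem_range.1 (hA ha)
    have hlt : a * b ^ j < b ^ k :=
      calc a * b ^ j < b * b ^ j :=
            Nat.mul_lt_mul_of_pos_right hab (pow_pos (a.zero_le.trans_lt hab) j)
        _ = b ^ (j + 1) := (pow_succ' b j).symm
        _ ≤ b ^ k := Nat.pow_le_pow_right (by omega) hj
    have hcol := (hline _ hlt).2 j hj
    rw [hcount, digit_mul_pow_self hab, if_pos ha] at hcol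
    omega
  · intro hcols t ht
    refine ⟨fun i => ?_, fun j hj => ?_⟩
    · rcases eq_or_ne i i₀ with rfl | hi
      · rwa [Function.update_self]
      · rw [Function.update_of_ne hi]
        exact hx i
    · have hcol := hcols j hj
      rw [hcount]
      split_ifs <;> omega

lemma genCkV_eq_biUnion {d b m k : ℕ} {A : Finset ℕ} (hb : 0 < b) (hA : A ⊆ range b)
    (hm : 0 < m) : GenCkV d b A m k = univ.biUnion (completeLinePoints d b A m k) := by
  ext x
  simp only [GenCkV, GenGammaV, completeLinePoints, lineColumns, mem_filter, mem_biUnion,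
    Fintype.mem_piFinset, mem_range, mem_univ, true_and, digit_lt hb, implies_true]
  constructor
  · rintro ⟨⟨hx, -⟩, i₀, hline⟩
    exact ⟨i₀, hx, (genLineComplete_iff hA hm hx).1 hline⟩
  · rintro ⟨i₀, hx, hcols⟩
    have hline := (genLineComplete_iff hA hm hx).2 hcols
    refine ⟨⟨hx, ?_⟩, i₀, hline⟩
    simpa using hline (x i₀) (hx i₀)

theorem card_genCkV_general (d b m : ℕ) (hd : 2 ≤ d) (hb : 3 ≤ b)
    (A : Finset ℕ) (hA : A ⊆ Finset.range b) (hm₁ : 1 ≤ m) :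
    ∃ c C : ℝ, 0 < c ∧ 0 < C ∧ ∀ k : ℕ,
      c * ((genN d b A m * b : ℕ) : ℝ) ^ k ≤ ((GenCkV d b A m k).card : ℝ) ∧
      ((GenCkV d b A m k).card : ℝ) ≤ C * ((genN d b A m * b : ℕ) : ℝ) ^ k := by
  refine ⟨1, d, one_pos, by positivity, fun k => ?_⟩
  have hCk : GenCkV d b A m k = univ.biUnion (completeLinePoints d b A m k) :=
    genCkV_eq_biUnion (by omega) hA (by omega)
  rw [one_mul, ← Nat.cast_pow, ← Nat.cast_mul, Nat.cast_le, Nat.cast_le, hCk]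
  constructor
  · rw [← card_completeLinePoints hA k ⟨0, by omega⟩]
    exact card_le_card (subset_biUnion_of_mem _ (mem_univ _))
  · calc #(univ.biUnion (completeLinePoints d b A m k))
        ≤ ∑ i₀, #(completeLinePoints d b A m k i₀) := card_biUnion_le
      _ = d * (genN d b A m * b) ^ k := by simp [card_completeLinePoints hA]

/-- The complete-lines subgraph `C_k` of `Γ_k(d,b,A,m)` satisfies `|C_k| ≍ (N·b)^k`. -/
theorem card_genCkV (d b m : ℕ) (hd : 2 ≤ d) (hb : 3 ≤ b)
    (A : Finset ℕ) (hA : A ⊆ Finset.range b) (hm₁ : 1 ≤ m) (hm₂ : m ≤ d) :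
    ∃ c C : ℝ, 0 < c ∧ 0 < C ∧ ∀ k : ℕ,
      c * ((genN d b A m * b : ℕ) : ℝ) ^ k ≤ ((GenCkV d b A m k).card : ℝ) ∧
      ((GenCkV d b A m k).card : ℝ) ≤ C * ((genN d b A m * b : ℕ) : ℝ) ^ k :=
  card_genCkV_general d b m hd hb A hA hm₁
end

section
/- Fix integers d ≥ 2, b ≥ 3 and a nonempty proper set A ⊊ {0,...,b−1}, and let E = (d−1)·log(b−|A|) / ((d−1)·log(b−|A|) + log b). Then sep^{1/2}_{S(d,b,A,1)}(n) ≽ n^E: there exists a constant c > 0 such that for infinitely many n, sep^{1/2}_{S(d,b,A,1)}(n) ≥ c·n^E. -/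
open scoped Classical

/-!
Fix `k` and let `R` be the set of the `ρ = (b - |A|) ^ k` numbers below `b ^ k` whose base-`b`
digits avoid `A`. The union of the axis-parallel lines `{x : x i < b ^ k, x j ∈ R for j ≠ i}`
lies in `S(d,b,A,1)`, contains each line as a path, and has between `b ^ k ρ ^ (d-1)` and
`d b ^ k ρ ^ (d-1)` points.

Let `T` leave components of at most half the size. Join two grid points `p, q ∈ R ^ d` by the
staircase that changes one coordinate at a time. A point of `T` lies on the `m`-th step, or on
the `m`-th line through `q`, for at most `2 ρ ^ (d+1)` pairs `(p, q)`, so some `p` is linked to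
all but `2 d |T| ρ` grid points `q`; every line through a linked `q` lies in the component of
`p`. Each point outside that component sees `ρ` unlinked grid points on its line, so double
counting leaves at most `2 d² |T| b ^ k` points outside, and `|T| ≥ ρ ^ (d-1) / (4 d²)`.
For `n = d b ^ k ρ ^ (d-1)` this is `≥ n ^ E / (4 d³)`.
-/

open Finset Function

namespace SimpleGraph

variable {V : Type*} {X : SimpleGraph V} {s : Set V} {u v w : V}

theorem ReachIn.symm (h : X.ReachIn s u v) : X.ReachIn s v u :=
  let ⟨hu, hv, hr⟩ := h; ⟨hv, hu, hr.symm⟩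

theorem ReachIn.trans (h : X.ReachIn s u v) (h' : X.ReachIn s v w) : X.ReachIn s u w :=
  let ⟨hu, _, hr⟩ := h; let ⟨_, hw, hr'⟩ := h'; ⟨hu, hw, hr.trans hr'⟩

theorem Adj.reachIn (h : X.Adj u v) (hu : u ∈ s) (hv : v ∈ s) : X.ReachIn s u v :=
  ⟨hu, hv, Adj.reachable (G := X.induce s) h⟩

theorem reachIn_of_succ_adj {N : ℕ} (f : ℕ → V) (hf : ∀ t < N, f t ∈ s)
    (hadj : ∀ t, t + 1 < N → X.Adj (f t) (f (t + 1))) {a c : ℕ} (ha : a < N) (hc : c < N) :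
    X.ReachIn s (f a) (f c) := by
  suffices h : ∀ t < N, X.ReachIn s (f 0) (f t) from (h a ha).symm.trans (h c hc)
  intro t ht
  induction t with
  | zero => exact ⟨hf 0 ht, hf 0 ht, .rfl⟩
  | succ t ih =>
    exact (ih (by omega)).trans ((hadj t ht).reachIn (hf t (by omega)) (hf _ ht))

end SimpleGraph

section HalfCut

variable {V : Type*} (X : SimpleGraph V) (G : Finset V)

theorem isHalfCutSet_self : IsHalfCutSet X G G := by
  refine ⟨subset_rfl, fun v => ?_⟩
  have : X.compIn ↑(G \ G) v = ∅ := by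
    ext w
    simp [SimpleGraph.compIn, SimpleGraph.ReachIn]
  rw [this, Set.ncard_empty]
  exact Nat.zero_le _

theorem cutHalf_le_card : cutHalf X G ≤ G.card :=
  Nat.sInf_le ⟨G, isHalfCutSet_self X G, rfl⟩

theorem exists_isHalfCutSet_card_eq_cutHalf :
    ∃ T, IsHalfCutSet X G T ∧ T.card = cutHalf X G :=
  Nat.sInf_mem (s := {t | ∃ T, IsHalfCutSet X G T ∧ T.card = t})
    ⟨G.card, G, isHalfCutSet_self X G, rfl⟩

theorem cutHalf_le_sepHalf {W : Set V} {n : ℕ} (hG : ↑G ⊆ W) (hn : G.card ≤ n) :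
    cutHalf X G ≤ sepHalf X W n := by
  rw [sepHalf]
  refine le_csSup ⟨n, ?_⟩ ⟨G, hG, hn, rfl⟩
  rintro c ⟨G', -, hG', rfl⟩
  exact (cutHalf_le_card X G').trans hG'

variable {X G}

theorem IsHalfCutSet.card_le_two_mul {T : Finset V} (hT : IsHalfCutSet X G T) (v : V) :
    G.card ≤ 2 * (G.filter (· ∉ X.compIn (↑G \ ↑T) v)).card := by
  set K := X.compIn (↑G \ ↑T) v
  have hK : ((G.filter (· ∈ K) : Finset V) : Set V) = K := by
    ext w
    simp only [coe_filter, Set.mem_ofPred_eq, and_iff_right_iff_imp]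
    exact fun ⟨_, hw, _⟩ => hw.1
  have hhalf : 2 * K.ncard ≤ G.card := by
    have := hT.2 v
    rwa [coe_sdiff] at this
  rw [← hK, Set.ncard_coe_finset] at hhalf
  have := card_filter_add_card_filter_not (s := G) (· ∈ K)
  omega

end HalfCut

namespace LineGrid

variable {d : ℕ}

def line (N : ℕ) (i : Fin d) (g : Fin d → ℕ) : Finset (Fin d → ℕ) :=
  Fintype.piFinset fun j => if j = i then range N else {g j}

def linesAlong (N : ℕ) (R : Finset ℕ) (i : Fin d) : Finset (Fin d → ℕ) :=
  Fintype.piFinset fun j => if j = i then range N else R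

def lineUnion (d N : ℕ) (R : Finset ℕ) : Finset (Fin d → ℕ) :=
  univ.biUnion (linesAlong N R)

def grid (d : ℕ) (R : Finset ℕ) : Finset (Fin d → ℕ) :=
  Fintype.piFinset fun _ => R

theorem mem_piFinset_ite {i : Fin d} {s : Finset ℕ} {t : Fin d → Finset ℕ}
    {w : Fin d → ℕ} :
    w ∈ Fintype.piFinset (fun j => if j = i then s else t j) ↔
      w i ∈ s ∧ ∀ j ≠ i, w j ∈ t j := by
  simp only [Fintype.mem_piFinset]
  refine ⟨fun h => ⟨by simpa using h i, fun j hj => by simpa [hj] using h j⟩, ?_⟩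
  rintro ⟨hi, h⟩ j
  split_ifs with hj
  · exact hj ▸ hi
  · exact h j hj

theorem card_piFinset_ite (i : Fin d) (s : Finset ℕ) (t : Fin d → Finset ℕ) :
    (Fintype.piFinset fun j => if j = i then s else t j).card =
      s.card * ∏ j ∈ univ.erase i, (t j).card := by
  rw [Fintype.card_piFinset, ← mul_prod_erase _ _ (mem_univ i), if_pos rfl]
  congr 1
  exact prod_congr rfl fun j hj => by rw [if_neg (ne_of_mem_erase hj)]

theorem mem_line {N : ℕ} {i : Fin d} {g w : Fin d → ℕ} :
    w ∈ line N i g ↔ w i < N ∧ ∀ j ≠ i, w j = g j := by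
  simp only [line, mem_piFinset_ite, mem_range, mem_singleton]

theorem card_line (N : ℕ) (i : Fin d) (g : Fin d → ℕ) : (line N i g).card = N := by
  simp only [line, card_piFinset_ite, card_range, card_singleton, prod_const_one, mul_one]

theorem mem_lineUnion {N : ℕ} {R : Finset ℕ} {w : Fin d → ℕ} :
    w ∈ lineUnion d N R ↔ ∃ i, w i < N ∧ ∀ j ≠ i, w j ∈ R := by
  simp only [lineUnion, linesAlong, mem_biUnion, mem_univ, true_and, mem_piFinset_ite, mem_range]

theorem card_linesAlong (N : ℕ) (R : Finset ℕ) (i : Fin d) :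
    (linesAlong N R i).card = N * R.card ^ (d - 1) := by
  rw [linesAlong, card_piFinset_ite, card_range, prod_const, card_erase_of_mem (mem_univ i),
    card_univ, Fintype.card_fin]

theorem card_lineUnion_le (N : ℕ) (R : Finset ℕ) :
    (lineUnion d N R).card ≤ d * (N * R.card ^ (d - 1)) := by
  refine card_biUnion_le.trans ?_
  simp [card_linesAlong]

theorem card_lineUnion_ge (N : ℕ) (R : Finset ℕ) (i : Fin d) :
    N * R.card ^ (d - 1) ≤ (lineUnion d N R).card :=
  card_linesAlong N R i ▸ card_le_card (subset_biUnion_of_mem _ (mem_univ i))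

theorem card_grid (R : Finset ℕ) : (grid d R).card = R.card ^ d := by
  simp [grid]

variable {N : ℕ} {R : Finset ℕ}

theorem update_mem_line {i : Fin d} {g : Fin d → ℕ} {t : ℕ} (ht : t < N) :
    update g i t ∈ line N i g :=
  mem_line.2 ⟨by simpa using ht, fun j hj => update_of_ne hj _ _⟩

theorem eq_update_of_mem_line {i : Fin d} {g w : Fin d → ℕ} (hw : w ∈ line N i g) :
    w = update g i (w i) := by
  ext j
  rcases eq_or_ne j i with rfl | hj
  · simp
  · rw [update_of_ne hj, (mem_line.1 hw).2 j hj]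

theorem line_subset_lineUnion {i : Fin d} {g : Fin d → ℕ} (hg : ∀ j ≠ i, g j ∈ R) :
    line N i g ⊆ lineUnion d N R := fun _ hw =>
  mem_lineUnion.2 ⟨i, (mem_line.1 hw).1, fun j hj => (mem_line.1 hw).2 j hj ▸ hg j hj⟩

def LinesArePaths (X : SimpleGraph (Fin d → ℕ)) (N : ℕ) (R : Finset ℕ) : Prop :=
  ∀ (i : Fin d) (g : Fin d → ℕ), (∀ j ≠ i, g j ∈ R) → ∀ t, t + 1 < N →
    X.Adj (update g i t) (update g i (t + 1))

variable {X : SimpleGraph (Fin d → ℕ)} {T : Finset (Fin d → ℕ)}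

theorem reachIn_of_mem_line (hX : LinesArePaths X N R) {i : Fin d} {g u v : Fin d → ℕ}
    (hg : ∀ j ≠ i, g j ∈ R) (hT : Disjoint (line N i g) T)
    (hu : u ∈ line N i g) (hv : v ∈ line N i g) :
    X.ReachIn (↑(lineUnion d N R) \ ↑T) u v := by
  rw [eq_update_of_mem_line hu, eq_update_of_mem_line hv]
  refine SimpleGraph.reachIn_of_succ_adj (update g i) (fun t ht => ?_) (hX i g hg)
    (mem_line.1 hu).1 (mem_line.1 hv).1
  have hl := update_mem_line (g := g) (i := i) ht
  exact ⟨line_subset_lineUnion hg hl, fun hT' => disjoint_left.1 hT hl hT'⟩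

def chainPt (p q : Fin d → ℕ) (m : ℕ) : Fin d → ℕ :=
  fun j => if (j : ℕ) < m then q j else p j

def Linked (N : ℕ) (T : Finset (Fin d → ℕ)) (p q : Fin d → ℕ) : Prop :=
  ∀ m : Fin d, Disjoint (line N m (chainPt p q (m + 1))) T ∧ Disjoint (line N m q) T

theorem chainPt_mem_grid {p q : Fin d → ℕ} (hp : p ∈ grid d R) (hq : q ∈ grid d R)
    (m : ℕ) :
    chainPt p q m ∈ grid d R := by
  simp only [grid, Fintype.mem_piFinset] at hp hq ⊢
  intro j
  unfold chainPt
  split_ifs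
  exacts [hq j, hp j]

theorem reachIn_chainPt_succ (hX : LinesArePaths X N R) (hRN : ∀ x ∈ R, x < N)
    {p q : Fin d → ℕ} (hp : p ∈ grid d R) (hq : q ∈ grid d R) {m : Fin d}
    (hT : Disjoint (line N m (chainPt p q (m + 1))) T) :
    X.ReachIn (↑(lineUnion d N R) \ ↑T) (chainPt p q m) (chainPt p q (m + 1)) := by
  have hgrid := fun m => Fintype.mem_piFinset.1 (chainPt_mem_grid hp hq m)
  refine reachIn_of_mem_line hX (fun j _ => hgrid _ j) hT ?_
    (mem_line.2 ⟨hRN _ (hgrid _ m), fun _ _ => rfl⟩)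
  refine mem_line.2 ⟨hRN _ (hgrid _ m), fun j hj => ?_⟩
  have : (j : ℕ) ≠ m := Fin.val_ne_of_ne hj
  simp only [chainPt]
  split_ifs <;> first | rfl | omega

theorem reachIn_of_linked (hX : LinesArePaths X N R) (hRN : ∀ x ∈ R, x < N) (hd : 0 < d)
    {p q : Fin d → ℕ} (hp : p ∈ grid d R) (hq : q ∈ grid d R) (h : Linked N T p q) :
    X.ReachIn (↑(lineUnion d N R) \ ↑T) p q := by
  have hstep := fun m => reachIn_chainPt_succ hX hRN hp hq (h m).1
  have key : ∀ n < d, X.ReachIn (↑(lineUnion d N R) \ ↑T) p (chainPt p q (n + 1)) := by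
    intro n hn
    induction n with
    | zero =>
      have h0 : chainPt p q 0 = p := funext fun j => if_neg (Nat.not_lt_zero _)
      simpa [h0] using hstep ⟨0, hn⟩
    | succ n ih => exact (ih (by omega)).trans (hstep ⟨n + 1, hn⟩)
  have hq' : chainPt p q (d - 1 + 1) = q := funext fun j => if_pos (by omega)
  simpa [hq'] using key (d - 1) (by omega)

theorem line_subset_compIn_of_linked (hX : LinesArePaths X N R) (hRN : ∀ x ∈ R, x < N)
    (hd : 0 < d) {p q : Fin d → ℕ} (hp : p ∈ grid d R) (hq : q ∈ grid d R)
    (h : Linked N T p q) (m : Fin d) :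
    ↑(line N m q) ⊆ X.compIn (↑(lineUnion d N R) \ ↑T) p := fun _ hw =>
  (reachIn_of_linked hX hRN hd hp hq h).trans <|
    reachIn_of_mem_line hX (fun j _ => Fintype.mem_piFinset.1 hq j) (h m).2
      (mem_line.2 ⟨hRN _ (Fintype.mem_piFinset.1 hq m), fun _ _ => rfl⟩) hw

theorem card_filter_grid_eqOn_le (R : Finset ℕ) (S : Finset (Fin d)) (w : Fin d → ℕ) :
    ((grid d R).filter fun p => ∀ j ∈ S, p j = w j).card ≤ R.card ^ Sᶜ.card := by
  have hsub : ((grid d R).filter fun p => ∀ j ∈ S, p j = w j) ⊆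
      Fintype.piFinset fun j => if j ∈ S then {w j} else R := by
    intro p hp
    rw [mem_filter, grid, Fintype.mem_piFinset] at hp
    refine Fintype.mem_piFinset.2 fun j => ?_
    split_ifs with hj
    exacts [mem_singleton.2 (hp.2 j hj), hp.1 j]
  refine (card_le_card hsub).trans_eq ?_
  simp only [Fintype.card_piFinset, apply_ite card, card_singleton]
  rw [prod_ite, prod_const_one, one_mul, prod_const, filter_not, filter_mem_eq_inter,
    univ_inter, compl_eq_univ_sdiff]

theorem card_pairs_eqOn_le (hR : 1 ≤ R.card) {m : Fin d} {S S' : Finset (Fin d)}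
    (hSS' : ∀ j ≠ m, j ∈ S ∨ j ∈ S') (w : Fin d → ℕ) :
    ((grid d R ×ˢ grid d R).filter fun pq =>
      (∀ j ∈ S, pq.1 j = w j) ∧ ∀ j ∈ S', pq.2 j = w j).card ≤ R.card ^ (d + 1) := by
  rw [filter_product (p := fun p : Fin d → ℕ => ∀ j ∈ S, p j = w j)
    (q := fun q : Fin d → ℕ => ∀ j ∈ S', q j = w j), card_product]
  refine (Nat.mul_le_mul (card_filter_grid_eqOn_le R S w)
    (card_filter_grid_eqOn_le R S' w)).trans ?_
  rw [← pow_add]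
  refine Nat.pow_le_pow_right hR ?_
  have hinter : Sᶜ ∩ S'ᶜ ⊆ {m} := fun j hj => by
    simp only [mem_inter, mem_compl] at hj
    by_contra hjm
    rcases hSS' j (mem_singleton.not.1 hjm) with h | h
    exacts [hj.1 h, hj.2 h]
  have := card_union_add_card_inter Sᶜ S'ᶜ
  have := card_le_card hinter
  have := card_le_univ (Sᶜ ∪ S'ᶜ)
  simp only [card_singleton, Fintype.card_fin] at *
  omega

/-- Some `w ∈ T` lies on the `m`-th step of the staircase or on the `m`-th line through `q`. -/
theorem exists_mem_of_not_linked {T : Finset (Fin d → ℕ)} {p q : Fin d → ℕ}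
    (h : ¬Linked N T p q) : ∃ w ∈ T, ∃ m : Fin d,
      ((∀ j, m < j → p j = w j) ∧ ∀ j, j < m → q j = w j) ∨ ∀ j ≠ m, q j = w j := by
  simp only [Linked, not_forall, not_and_or, not_disjoint_iff] at h
  obtain ⟨m, ⟨w, hwl, hwT⟩ | ⟨w, hwl, hwT⟩⟩ := h
  · refine ⟨w, hwT, m, Or.inl ⟨fun j hj => ?_, fun j hj => ?_⟩⟩ <;>
      rw [(mem_line.1 hwl).2 j (by rintro rfl; exact lt_irrefl _ hj), chainPt] <;>
      rw [Fin.lt_def] at hj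
    · rw [if_neg (by omega)]
    · rw [if_pos (by omega)]
  · exact ⟨w, hwT, m, Or.inr fun j hj => ((mem_line.1 hwl).2 j hj).symm⟩

theorem sum_card_not_linked_le (hR : 1 ≤ R.card) (N : ℕ) (T : Finset (Fin d → ℕ)) :
    ∑ p ∈ grid d R, ((grid d R).filter fun q => ¬Linked N T p q).card ≤
      2 * d * T.card * R.card ^ (d + 1) := by
  let pairsEqOn (w : Fin d → ℕ) (S S' : Finset (Fin d)) :=
    (grid d R ×ˢ grid d R).filter fun pq =>
      (∀ j ∈ S, pq.1 j = w j) ∧ ∀ j ∈ S', pq.2 j = w j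
  have hsub : ((grid d R ×ˢ grid d R).filter fun pq => ¬Linked N T pq.1 pq.2) ⊆
      T.biUnion fun w => univ.biUnion fun m =>
        pairsEqOn w (univ.filter (m < ·)) (univ.filter (· < m)) ∪
          pairsEqOn w ∅ (univ.erase m) := by
    intro pq hpq
    obtain ⟨hmem, hnot⟩ := mem_filter.1 hpq
    obtain ⟨w, hwT, m, h⟩ := exists_mem_of_not_linked hnot
    refine mem_biUnion.2 ⟨w, hwT, mem_biUnion.2 ⟨m, mem_univ _, ?_⟩⟩
    rcases h with ⟨hp, hq⟩ | hq
    · refine mem_union_left _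
        (mem_filter.2 ⟨hmem, fun j hj => hp j ?_, fun j hj => hq j ?_⟩) <;>
        simpa using hj
    · exact mem_union_right _ (mem_filter.2 ⟨hmem, fun j hj => absurd hj (notMem_empty j),
        fun j hj => hq j (ne_of_mem_erase hj)⟩)
  have hcount : ∀ w m, (pairsEqOn w (univ.filter (m < ·)) (univ.filter (· < m)) ∪
      pairsEqOn w ∅ (univ.erase m)).card ≤ 2 * R.card ^ (d + 1) := fun w m => by
    refine (card_union_le _ _).trans ?_
    rw [two_mul]
    refine Nat.add_le_add (card_pairs_eqOn_le hR (m := m) (fun j hj => ?_) w)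
      (card_pairs_eqOn_le hR (m := m) (fun j hj => Or.inr (mem_erase.2 ⟨hj, mem_univ j⟩)) w)
    simp only [mem_filter, mem_univ, true_and]
    exact (lt_or_gt_of_ne hj).symm
  calc ∑ p ∈ grid d R, ((grid d R).filter fun q => ¬Linked N T p q).card
      = ((grid d R ×ˢ grid d R).filter fun pq => ¬Linked N T pq.1 pq.2).card := by
        simp only [card_filter, sum_product]
    _ ≤ ∑ w ∈ T, ∑ m : Fin d, 2 * R.card ^ (d + 1) :=
        (card_le_card hsub).trans <| card_biUnion_le.trans <|
          sum_le_sum fun w _ => card_biUnion_le.trans <| sum_le_sum fun m _ => hcount w m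
    _ = 2 * d * T.card * R.card ^ (d + 1) := by
        simp only [sum_const, card_univ, Fintype.card_fin, smul_eq_mul]
        ring

/-- Double counting: each point of `lineUnion` outside the component of `p` lies on a line
whose `R.card` grid points are all unlinked to `p`, and a line has only `N` points. -/
theorem card_filter_notMem_compIn_mul_le (hX : LinesArePaths X N R) (hRN : ∀ x ∈ R, x < N)
    (hd : 0 < d) {p : Fin d → ℕ} (hp : p ∈ grid d R) :
    ((lineUnion d N R).filter (· ∉ X.compIn (↑(lineUnion d N R) \ ↑T) p)).card * R.card ≤
      d * ((grid d R).filter fun q => ¬Linked N T p q).card * N := by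
  have hdouble := card_mul_le_card_mul
    (fun w (mg : Fin d × (Fin d → ℕ)) => w ∈ line N mg.1 mg.2)
    (s := (lineUnion d N R).filter (· ∉ X.compIn (↑(lineUnion d N R) \ ↑T) p))
    (t := univ ×ˢ (grid d R).filter fun q => ¬Linked N T p q) (m := R.card) (n := N) ?_ ?_
  · rwa [card_product, card_univ, Fintype.card_fin] at hdouble
  · intro w hw
    obtain ⟨hwU, hwK⟩ := mem_filter.1 hw
    obtain ⟨i, hi, hR⟩ := mem_lineUnion.1 hwU
    rw [← card_image_of_injective R (f := fun t => (i, update w i t))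
      fun t t' h => by simpa using congrArg (fun mg => mg.2 i) h]
    refine card_le_card fun mg hmg => ?_
    obtain ⟨t, ht, rfl⟩ := mem_image.1 hmg
    have hg : update w i t ∈ grid d R := Fintype.mem_piFinset.2 fun j => by
      rcases eq_or_ne j i with rfl | hj
      · simpa using ht
      · simpa [hj] using hR j hj
    have hwl : w ∈ line N i (update w i t) :=
      mem_line.2 ⟨hi, fun j hj => (update_of_ne hj _ _).symm⟩
    refine (mem_bipartiteAbove _).2
      ⟨mem_product.2 ⟨mem_univ _, mem_filter.2 ⟨hg, fun hl => ?_⟩⟩, hwl⟩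
    exact hwK (line_subset_compIn_of_linked hX hRN hd hp hg hl i hwl)
  · intro mg _
    refine (card_le_card fun w hw => ?_).trans (card_line N mg.1 mg.2).le
    exact (mem_filter.1 hw).2

theorem pow_le_mul_card_of_isHalfCutSet (hX : LinesArePaths X N R) (hRN : ∀ x ∈ R, x < N)
    (hd : 0 < d) (hR : 1 ≤ R.card) (hT : IsHalfCutSet X (lineUnion d N R) T) :
    R.card ^ (d - 1) ≤ 4 * d ^ 2 * T.card := by
  obtain ⟨p, hp, hfew⟩ : ∃ p ∈ grid d R,
      ((grid d R).filter fun q => ¬Linked N T p q).card ≤ 2 * d * T.card * R.card := by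
    refine exists_le_of_sum_le (Fintype.piFinset_nonempty.2 fun _ => card_pos.1 hR) ?_
    rw [sum_const, card_grid, smul_eq_mul]
    refine (sum_card_not_linked_le hR N T).trans_eq ?_
    ring
  have hcover := card_filter_notMem_compIn_mul_le (T := T) hX hRN hd hp
  have hhalf := hT.card_le_two_mul p
  have hbig := card_lineUnion_ge N R ⟨0, hd⟩
  obtain ⟨x, hx⟩ := card_pos.1 hR
  have hN : 0 < N := (Nat.zero_le x).trans_lt (hRN x hx)
  set out := ((lineUnion d N R).filter (· ∉ X.compIn (↑(lineUnion d N R) \ ↑T) p)).card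
  have hout : out ≤ 2 * d ^ 2 * T.card * N := by
    refine Nat.le_of_mul_le_mul_right (hcover.trans ?_) hR
    calc d * ((grid d R).filter fun q => ¬Linked N T p q).card * N
        ≤ d * (2 * d * T.card * R.card) * N := by gcongr
      _ = 2 * d ^ 2 * T.card * N * R.card := by ring
  refine Nat.le_of_mul_le_mul_left ?_ hN
  calc N * R.card ^ (d - 1) ≤ 2 * out := hbig.trans hhalf
    _ ≤ N * (4 * d ^ 2 * T.card) := by nlinarith

theorem pow_le_mul_cutHalf (hX : LinesArePaths X N R) (hRN : ∀ x ∈ R, x < N) (hd : 0 < d)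
    (hR : 1 ≤ R.card) : R.card ^ (d - 1) ≤ 4 * d ^ 2 * cutHalf X (lineUnion d N R) := by
  obtain ⟨T, hT, hcard⟩ := exists_isHalfCutSet_card_eq_cutHalf X (lineUnion d N R)
  exact hcard ▸ pow_le_mul_card_of_isHalfCutSet hX hRN hd hR hT

end LineGrid

namespace GenSep

open LineGrid

variable {b : ℕ} {A : Finset ℕ}

theorem digit_zero (b x : ℕ) : digit b 0 x = x % b := by
  simp [digit]

theorem digit_succ (b j x : ℕ) : digit b (j + 1) x = digit b j (x / b) := by
  rw [digit, digit, pow_succ', Nat.div_div_eq_div_mul]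

def avoiding (b : ℕ) (A : Finset ℕ) (k : ℕ) : Finset ℕ :=
  (range (b ^ k)).filter fun x => ∀ j < k, digit b j x ∉ A

theorem card_avoiding (hA : A ⊆ range b) (k : ℕ) :
    (avoiding b A k).card = (b - A.card) ^ k := by
  induction k with
  | zero => rfl
  | succ k ih =>
    rcases Nat.eq_zero_or_pos b with rfl | hb
    · simp [avoiding]
    suffices (avoiding b A (k + 1)).card = ((range b \ A) ×ˢ avoiding b A k).card by
      rw [this, card_product, card_sdiff_of_subset hA, card_range, ih, pow_succ']
    have hsplit {a y : ℕ} (ha : a < b) : (a + b * y) % b = a ∧ (a + b * y) / b = y := by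
      rw [Nat.add_mul_mod_self_left, Nat.mod_eq_of_lt ha, Nat.add_mul_div_left _ _ hb,
        Nat.div_eq_of_lt ha, zero_add]
      exact ⟨rfl, rfl⟩
    refine card_nbij' (fun x => (x % b, x / b)) (fun ay => ay.1 + b * ay.2) ?_ ?_
      (fun x _ => Nat.mod_add_div x b) (fun ay hay => ?_)
    · intro x hx
      simp only [avoiding, coe_filter, Set.mem_ofPred_eq, mem_range] at hx
      simp only [coe_product, Set.mem_prod, coe_sdiff, Set.mem_sdiff, avoiding, coe_filter,
        Set.mem_ofPred_eq, mem_range, coe_range, Set.mem_Iio]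
      refine ⟨⟨Nat.mod_lt x hb, digit_zero b x ▸ hx.2 0 (by omega)⟩,
        Nat.div_lt_of_lt_mul (pow_succ' b k ▸ hx.1), fun j hj => ?_⟩
      rw [← digit_succ]
      exact hx.2 (j + 1) (by omega)
    · rintro ⟨a, y⟩ hay
      simp only [coe_product, Set.mem_prod, coe_sdiff, Set.mem_sdiff, avoiding, coe_filter,
        Set.mem_ofPred_eq, mem_range, coe_range, Set.mem_Iio] at hay ⊢
      obtain ⟨⟨ha, haA⟩, hy, hyA⟩ := hay
      refine ⟨by rw [pow_succ']; nlinarith, fun j hj => ?_⟩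
      rcases j with _ | j
      · rwa [digit_zero, (hsplit ha).1]
      · rw [digit_succ, (hsplit ha).2]
        exact hyA j (by omega)
    · obtain ⟨ha, -⟩ := mem_sdiff.1 (mem_product.1 hay).1
      exact Prod.ext (hsplit (mem_range.1 ha)).1 (hsplit (mem_range.1 ha)).2

variable {d k : ℕ}

theorem lt_of_mem_avoiding {x : ℕ} (hx : x ∈ avoiding b A k) : x < b ^ k :=
  mem_range.1 (mem_filter.1 hx).1

theorem mem_genS_of_mem_lineUnion {x : Fin d → ℕ}
    (hx : x ∈ lineUnion d (b ^ k) (avoiding b A k)) :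
    x ∈ GenS d b A 1 := by
  obtain ⟨i, hi, hR⟩ := mem_lineUnion.1 hx
  refine ⟨k, fun j => ?_, fun p hp => ?_⟩
  · rcases eq_or_ne j i with rfl | hj
    exacts [hi, lt_of_mem_avoiding (hR j hj)]
  · -- only the free coordinate `i` can have a digit in `A`
    refine (card_le_card fun j hj => mem_singleton.2 ?_).trans (card_singleton i).le
    by_contra hji
    exact (mem_filter.1 (hR j hji)).2 p hp (mem_filter.1 hj).2

theorem linesArePaths_genGraph :
    LinesArePaths (GenGraph d b A 1) (b ^ k) (avoiding b A k) := by
  intro i g hg t ht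
  have hmem : ∀ s < b ^ k, update g i s ∈ GenS d b A 1 := fun s hs =>
    mem_genS_of_mem_lineUnion (line_subset_lineUnion hg (update_mem_line hs))
  refine ⟨hmem t (by omega), hmem (t + 1) ht, ?_⟩
  rw [sum_eq_single i (fun j _ hj => by simp [update_of_ne hj]) (by simp)]
  simp

theorem pow_le_mul_sepHalf (hd : 0 < d) (hA : A ⊂ range b) (k : ℕ) :
    ((b - A.card) ^ k) ^ (d - 1) ≤ 4 * d ^ 2 *
      sepHalf (GenGraph d b A 1) (GenS d b A 1) (d * (b ^ k * ((b - A.card) ^ k) ^ (d - 1))) := by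
  have hcard := card_avoiding hA.subset k
  have hAb : A.card < b := by simpa using card_lt_card hA
  have hbound := pow_le_mul_cutHalf linesArePaths_genGraph (fun _ => lt_of_mem_avoiding) hd
    (hcard ▸ Nat.one_le_pow _ _ (by omega))
  rw [hcard] at hbound
  refine hbound.trans (Nat.mul_le_mul_left _ (cutHalf_le_sepHalf _ _ (fun _ hx =>
    mem_genS_of_mem_lineUnion hx) ?_))
  simpa [hcard] using card_lineUnion_le (d := d) (b ^ k) (avoiding b A k)

end GenSep

open Real in
/-- The exponent `E` is chosen so that `n ^ E` is the cut size `ρ ^ m` when `n = b ^ k ρ ^ m`. -/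
theorem rpow_exponent_eq {r b : ℕ} (hr : 0 < r) (hb : 1 < b) (k m : ℕ) :
    ((b ^ k * (r ^ k) ^ m : ℕ) : ℝ) ^ ((m : ℝ) * log r / (m * log r + log b)) =
      ((r ^ k) ^ m : ℕ) := by
  have hlogr : 0 ≤ log r := log_nonneg (by exact_mod_cast hr)
  have hlogb : 0 < log b := log_pos (by exact_mod_cast hb)
  have hpos : (0 : ℝ) < ((b ^ k * (r ^ k) ^ m : ℕ) : ℝ) := by
    have : 0 < b := by omega
    positivity
  rw [rpow_def_of_pos hpos, ← exp_log (by positivity : (0 : ℝ) < ((r ^ k) ^ m : ℕ))]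
  congr 1
  push_cast
  rw [log_mul (by positivity) (by positivity), log_pow, log_pow, log_pow]
  field_simp
  ring

theorem gen_sep_lower_general (d b : ℕ) (hd : 2 ≤ d) (hb : 3 ≤ b)
    (A : Finset ℕ) (hA : A ⊂ Finset.range b) :
    ∃ c : ℝ, 0 < c ∧ ∀ M : ℕ, ∃ n : ℕ, M ≤ n ∧
      c * (n : ℝ) ^ (((d : ℝ) - 1) * Real.log ((b - A.card : ℕ) : ℝ) /
          (((d : ℝ) - 1) * Real.log ((b - A.card : ℕ) : ℝ) + Real.log b))
        ≤ (sepHalf (GenGraph d b A 1) (GenS d b A 1) n : ℝ) := by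
  have hAb : A.card < b := by simpa using card_lt_card hA
  set r := b - A.card
  have hr : 0 < r := by omega
  refine ⟨1 / (4 * d ^ 3), by positivity,
    fun M => ⟨d * (b ^ M * (r ^ M) ^ (d - 1)), ?_, ?_⟩⟩
  · calc M ≤ b ^ M := (Nat.lt_pow_self (by omega)).le
      _ ≤ b ^ M * (r ^ M) ^ (d - 1) := Nat.le_mul_of_pos_right _ (by positivity)
      _ ≤ d * (b ^ M * (r ^ M) ^ (d - 1)) := Nat.le_mul_of_pos_left _ (by omega)
  have hsep : (((r ^ M) ^ (d - 1) : ℕ) : ℝ) ≤ 4 * d ^ 2 *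
      sepHalf (GenGraph d b A 1) (GenS d b A 1) (d * (b ^ M * (r ^ M) ^ (d - 1))) := by
    exact_mod_cast GenSep.pow_le_mul_sepHalf (by omega) hA M
  have hlogb : 0 < Real.log b := Real.log_pos (by exact_mod_cast (by omega : 1 < b))
  have hlogr : 0 ≤ ((d - 1 : ℕ) : ℝ) * Real.log r :=
    mul_nonneg (Nat.cast_nonneg _) (Real.log_nonneg (by exact_mod_cast hr))
  have hE :
      ((d - 1 : ℕ) : ℝ) * Real.log r / ((d - 1 : ℕ) * Real.log r + Real.log b) ≤ 1 := by
    rw [div_le_one (by positivity)]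
    linarith
  rw [show (d : ℝ) - 1 = ((d - 1 : ℕ) : ℝ) by rw [Nat.cast_sub (by omega), Nat.cast_one],
    Nat.cast_mul, Real.mul_rpow (by positivity) (by positivity), rpow_exponent_eq hr (by omega)]
  calc 1 / (4 * (d : ℝ) ^ 3) * (_ * (((r ^ M) ^ (d - 1) : ℕ) : ℝ))
      ≤ 1 / (4 * (d : ℝ) ^ 3) * (d * (4 * d ^ 2 * _)) := by
        gcongr
        exact Real.rpow_le_self_of_one_le (by exact_mod_cast (by omega : 1 ≤ d)) hE
    _ = _ := by field_simp

/-- Lower bound on the separation profile of `S(d,b,A,1)`: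
`sep¹ᐟ²(n) ≽ n^E` where `E = (d-1)·log(b-|A|) / ((d-1)·log(b-|A|) + log b)`. -/
theorem gen_sep_lower (d b : ℕ) (hd : 2 ≤ d) (hb : 3 ≤ b)
    (A : Finset ℕ) (hA : A ⊂ Finset.range b) (hAne : A.Nonempty) :
    ∃ c : ℝ, 0 < c ∧ ∀ M : ℕ, ∃ n : ℕ, M ≤ n ∧
      c * (n : ℝ) ^ (((d : ℝ) - 1) * Real.log ((b - A.card : ℕ) : ℝ) /
          (((d : ℝ) - 1) * Real.log ((b - A.card : ℕ) : ℝ) + Real.log b))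
        ≤ (sepHalf (GenGraph d b A 1) (GenS d b A 1) n : ℝ) :=
  gen_sep_lower_general d b hd hb A hA
end

section
/- For every ε, ε' ∈ (0,1) and every infinite bounded-degree graph X, the separation profiles sep^ε_X and sep^{ε'}_X agree up to constants: there exists a constant C > 0 such that sep^ε_X(n) ≤ C·sep^{ε'}_X(Cn) and sep^{ε'}_X(n) ≤ C·sep^ε_X(Cn) for all n. -/
open scoped Classical

/-- `cutᵉ` of the subgraph of `X` induced on the finite vertex set `G`: the least size of a
vertex set whose removal leaves all connected components of size at most `ε·|G|`. -/
noncomputable def cutEps {V : Type*} (X : SimpleGraph V) (ε : ℝ) (G : Finset V) : ℕ :=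
  sInf {t | ∃ T : Finset V, T ⊆ G ∧ T.card = t ∧
    ∀ v : V, ((X.compIn (↑(G \ T)) v).ncard : ℝ) ≤ ε * G.card}

/-- The `ε`-separation profile of `X`. -/
noncomputable def sepEps {V : Type*} (X : SimpleGraph V) (ε : ℝ) (n : ℕ) : ℕ :=
  sSup {c | ∃ G : Finset V, G.card ≤ n ∧ c = cutEps X ε G}

namespace SimpleGraph
variable {V : Type*} (X : SimpleGraph V)

lemma compIn_subset (s : Set V) (v : V) : X.compIn s v ⊆ s := fun _ hw => hw.2.1

lemma mem_compIn_self {s : Set V} {v : V} (h : v ∈ s) : v ∈ X.compIn s v :=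
  ⟨h, h, Reachable.refl _⟩

lemma reachIn_of_walk {s t : Set V} : ∀ {a b : ↥s} (p : (X.induce s).Walk a b),
    (∀ x ∈ p.support, (x : V) ∈ t) → X.ReachIn t a b := by
  intro a b p
  induction p with
  | nil =>
    intro h
    exact ⟨h _ (Walk.start_mem_support _), h _ (Walk.start_mem_support _), Reachable.refl _⟩
  | @cons u v w huv p ih =>
    intro h
    have h1 : (u : V) ∈ t := h u (by simp)
    have h2 : (v : V) ∈ t := h v (by simp)
    obtain ⟨hv', hw', r⟩ := ih (fun x hx => h x (by simp [hx]))
    refine ⟨h1, hw', ?_⟩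
    have hadj : (X.induce t).Adj ⟨(u : V), h1⟩ ⟨(v : V), h2⟩ := huv
    have : (⟨(v : V), h2⟩ : ↥t) = ⟨(v : V), hv'⟩ := rfl
    exact (hadj.reachable).trans (this ▸ r)

lemma compIn_subset_compIn {s t : Set V} {v : V} (h : X.compIn s v ⊆ t) :
    X.compIn s v ⊆ X.compIn t v := by
  intro w hw
  obtain ⟨hv, hws, r⟩ := hw
  obtain ⟨p⟩ := r
  refine X.reachIn_of_walk p (fun x hx => h ⟨hv, x.2, ⟨p.takeUntil x hx⟩⟩)

lemma compIn_mono {s t : Set V} (hst : s ⊆ t) (v : V) : X.compIn s v ⊆ X.compIn t v :=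
  X.compIn_subset_compIn ((X.compIn_subset s v).trans hst)

lemma compIn_eq_of_mem {s : Set V} {v w : V} (h : w ∈ X.compIn s v) :
    X.compIn s w = X.compIn s v := by
  obtain ⟨hv, hw, r⟩ := h
  ext x
  constructor
  · rintro ⟨_, hx, r'⟩
    exact ⟨hv, hx, r.trans r'⟩
  · rintro ⟨_, hx, r'⟩
    exact ⟨hw, hx, r.symm.trans r'⟩

end SimpleGraph


section
variable {V : Type*} (X : SimpleGraph V)

lemma compIn_empty_finset (v : V) : X.compIn (↑(∅ : Finset V)) v = ∅ :=
  Set.eq_empty_iff_forall_notMem.2 (fun w hw => by simpa using hw.2.1)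

lemma cutEps_nonempty {ε : ℝ} (hε : 0 ≤ ε) (G : Finset V) :
    {t | ∃ T : Finset V, T ⊆ G ∧ T.card = t ∧
      ∀ v : V, ((X.compIn (↑(G \ T)) v).ncard : ℝ) ≤ ε * G.card}.Nonempty := by
  refine ⟨G.card, G, subset_rfl, rfl, fun v => ?_⟩
  rw [Finset.sdiff_self, compIn_empty_finset]
  simpa using mul_nonneg hε (Nat.cast_nonneg _)

lemma cutEps_spec {ε : ℝ} (hε : 0 ≤ ε) (G : Finset V) :
    ∃ T : Finset V, T ⊆ G ∧ T.card = cutEps X ε G ∧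
      ∀ v : V, ((X.compIn (↑(G \ T)) v).ncard : ℝ) ≤ ε * G.card :=
  Nat.sInf_mem (cutEps_nonempty X hε G)

lemma cutEps_le_card (ε : ℝ) (G : Finset V) : cutEps X ε G ≤ G.card := by
  rcases Set.eq_empty_or_nonempty {t | ∃ T : Finset V, T ⊆ G ∧ T.card = t ∧
      ∀ v : V, ((X.compIn (↑(G \ T)) v).ncard : ℝ) ≤ ε * G.card} with h | h
  · rw [cutEps, h, Nat.sInf_empty]
    exact Nat.zero_le _
  · obtain ⟨T, hT, hc, _⟩ := Nat.sInf_mem h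
    rw [cutEps, ← hc]
    exact Finset.card_le_card hT

lemma sepEps_bddAbove (ε : ℝ) (n : ℕ) :
    BddAbove {c | ∃ G : Finset V, G.card ≤ n ∧ c = cutEps X ε G} :=
  ⟨n, fun c ⟨G, h1, h2⟩ => h2 ▸ (cutEps_le_card X ε G).trans h1⟩

lemma sepEps_nonempty (ε : ℝ) (n : ℕ) :
    {c | ∃ G : Finset V, G.card ≤ n ∧ c = cutEps X ε G}.Nonempty :=
  ⟨cutEps X ε ∅, ∅, by simp, rfl⟩

lemma cutEps_le_sepEps {ε : ℝ} {G : Finset V} {n : ℕ} (h : G.card ≤ n) :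
    cutEps X ε G ≤ sepEps X ε n :=
  le_csSup (sepEps_bddAbove X ε n) ⟨G, h, rfl⟩

lemma sepEps_mono (ε : ℝ) {m n : ℕ} (h : m ≤ n) : sepEps X ε m ≤ sepEps X ε n :=
  csSup_le_csSup (sepEps_bddAbove X ε n) (sepEps_nonempty X ε m)
    (fun c ⟨G, h1, h2⟩ => ⟨G, h1.trans h, h2⟩)

lemma sepEps_le {ε : ℝ} {n M : ℕ} (h : ∀ G : Finset V, G.card ≤ n → cutEps X ε G ≤ M) :
    sepEps X ε n ≤ M :=
  csSup_le (sepEps_nonempty X ε n) (fun c ⟨G, h1, h2⟩ => h2 ▸ h G h1)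
end

section
variable {V : Type*}

lemma compIn_empty_of_not_mem (X : SimpleGraph V) {s : Set V} {v : V} (h : v ∉ s) :
    X.compIn s v = ∅ :=
  Set.eq_empty_iff_forall_notMem.2 (fun _ hw => h hw.1)

lemma ncard_compIn_le (X : SimpleGraph V) (F : Finset V) (v : V) :
    (X.compIn (↑F) v).ncard ≤ F.card := by
  have h := Set.ncard_le_ncard (X.compIn_subset (↑F) v) F.finite_toSet
  rwa [Set.ncard_coe_finset] at h

lemma key (X : SimpleGraph V) {ε' b : ℝ} (h0 : 0 < ε') (h1 : ε' < 1) (hb : 0 < b)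
    (N s : ℕ) (hs : ∀ H : Finset V, H.card ≤ N → cutEps X ε' H ≤ s) :
    ∀ k : ℕ, ∀ H : Finset V, H.card ≤ N →
      ∃ T : Finset V, T ⊆ H ∧ ((T.card : ℝ) * b ≤ s * (k + 1) * H.card) ∧
        ∀ v : V, ((X.compIn (↑(H \ T)) v).ncard : ℝ) ≤ max b (ε' ^ (k + 1) * H.card) := by
  have small : ∀ H : Finset V, (H.card : ℝ) ≤ b → ∀ v : V,
      ((X.compIn (↑(H \ (∅ : Finset V))) v).ncard : ℝ) ≤ b := by
    intro H hHb v
    refine le_trans ?_ hHb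
    have h1 := ncard_compIn_le X (H \ ∅) v
    have h2 := Finset.card_le_card (Finset.sdiff_subset (s := H) (t := (∅ : Finset V)))
    exact_mod_cast h1.trans h2
  intro k
  induction k with
  | zero =>
    intro H hH
    by_cases hsmall : (H.card : ℝ) ≤ b
    · refine ⟨∅, Finset.empty_subset _, by simp; positivity, fun v => le_trans (small H hsmall v) (le_max_left _ _)⟩
    · push_neg at hsmall
      obtain ⟨T₀, hT₀H, hT₀card, hT₀comp⟩ := cutEps_spec X h0.le H
      have hT₀s : (T₀.card : ℝ) ≤ s := by
        have := hs H hH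
        rw [hT₀card]
        exact_mod_cast this
      refine ⟨T₀, hT₀H, ?_, fun v => ?_⟩
      · calc (T₀.card : ℝ) * b ≤ s * H.card := by
              apply mul_le_mul hT₀s hsmall.le hb.le (Nat.cast_nonneg _)
          _ ≤ s * ((0 : ℕ) + 1) * H.card := by norm_num
      · refine le_max_of_le_right ?_
        simpa [pow_one] using hT₀comp v
  | succ k IH =>
    intro H hH
    by_cases hsmall : (H.card : ℝ) ≤ b
    · refine ⟨∅, Finset.empty_subset _, by simp; positivity, fun v => le_trans (small H hsmall v) (le_max_left _ _)⟩
    push_neg at hsmall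
    obtain ⟨T₀, hT₀H, hT₀card, hT₀comp⟩ := cutEps_spec X h0.le H
    have hT₀s : (T₀.card : ℝ) ≤ s := by
      have := hs H hH
      rw [hT₀card]
      exact_mod_cast this
    have hfin : ∀ v : V, (X.compIn (↑(H \ T₀)) v).Finite :=
      fun v => (H \ T₀).finite_toSet.subset (X.compIn_subset _ v)
    set 𝒞 : Finset (Finset V) := (H \ T₀).image (fun v => (hfin v).toFinset) with h𝒞
    have hCH : ∀ C ∈ 𝒞, C ⊆ H := by
      intro C hC
      obtain ⟨v, _, rfl⟩ := Finset.mem_image.1 hC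
      intro x hx
      rw [Set.Finite.mem_toFinset] at hx
      exact (Finset.mem_sdiff.1 (X.compIn_subset _ _ hx)).1
    have hCN : ∀ C ∈ 𝒞, C.card ≤ N :=
      fun C hC => le_trans (Finset.card_le_card (hCH C hC)) hH
    have hex : ∀ C : Finset V, ∃ T : Finset V, T ⊆ C ∧ (C.card ≤ N →
        ((T.card : ℝ) * b ≤ s * (k + 1) * C.card) ∧
        ∀ v : V, ((X.compIn (↑(C \ T)) v).ncard : ℝ) ≤ max b (ε' ^ (k + 1) * C.card)) := by
      intro C
      by_cases h : C.card ≤ N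
      · obtain ⟨T, a1, a2, a3⟩ := IH C h
        exact ⟨T, a1, fun _ => ⟨a2, a3⟩⟩
      · exact ⟨∅, Finset.empty_subset _, fun h' => absurd h' h⟩
    choose F hF1 hF2 using hex
    have hdisj : ∀ C ∈ 𝒞, ∀ C' ∈ 𝒞, C ≠ C' → Disjoint C C' := by
      intro C hC C' hC' hne
      obtain ⟨v, _, rfl⟩ := Finset.mem_image.1 hC
      obtain ⟨w, _, rfl⟩ := Finset.mem_image.1 hC'
      rw [Finset.disjoint_left]
      intro x hx hx'
      rw [Set.Finite.mem_toFinset] at hx hx'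
      apply hne
      have e1 := X.compIn_eq_of_mem hx
      have e2 := X.compIn_eq_of_mem hx'
      exact Set.Finite.toFinset_inj.2 (e1.symm.trans e2)
    refine ⟨T₀ ∪ 𝒞.biUnion F, ?_, ?_, fun v => ?_⟩
    · apply Finset.union_subset hT₀H
      exact Finset.biUnion_subset.2 (fun C hC => (hF1 C).trans (hCH C hC))
    · -- cardinality bound
      have hsum : ∑ C ∈ 𝒞, C.card ≤ H.card := by
        have h1 : (𝒞.biUnion id).card = ∑ C ∈ 𝒞, C.card := Finset.card_biUnion hdisj
        have h2 : 𝒞.biUnion id ⊆ H := Finset.biUnion_subset.2 (fun C hC => hCH C hC)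
        rw [← h1]
        exact Finset.card_le_card h2
      have hcard : (T₀ ∪ 𝒞.biUnion F).card ≤ T₀.card + ∑ C ∈ 𝒞, (F C).card :=
        le_trans (Finset.card_union_le _ _)
          (Nat.add_le_add_left (Finset.card_biUnion_le) _)
      push_cast
      calc ((T₀ ∪ 𝒞.biUnion F).card : ℝ) * b
          ≤ ((T₀.card + ∑ C ∈ 𝒞, (F C).card : ℕ) : ℝ) * b := by
            exact mul_le_mul_of_nonneg_right (by exact_mod_cast hcard) hb.le
        _ = (T₀.card : ℝ) * b + ∑ C ∈ 𝒞, ((F C).card : ℝ) * b := by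
            push_cast [add_mul, Finset.sum_mul]
            rfl
        _ ≤ (s : ℝ) * H.card + ∑ C ∈ 𝒞, ((s : ℝ) * (k + 1) * C.card) := by
            refine add_le_add (mul_le_mul hT₀s hsmall.le hb.le (Nat.cast_nonneg _)) ?_
            exact Finset.sum_le_sum (fun C hC => (hF2 C (hCN C hC)).1)
        _ = (s : ℝ) * H.card + (s : ℝ) * (k + 1) * ∑ C ∈ 𝒞, (C.card : ℝ) := by
            rw [Finset.mul_sum]
        _ ≤ (s : ℝ) * H.card + (s : ℝ) * (k + 1) * H.card := by
            have h3 : (∑ C ∈ 𝒞, (C.card : ℝ)) ≤ (H.card : ℝ) := by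
              exact_mod_cast hsum
            have h4 : (0 : ℝ) ≤ (s : ℝ) * (k + 1) := by positivity
            nlinarith
        _ = (s : ℝ) * ((k : ℝ) + 1 + 1) * H.card := by ring
    · -- component bound
      by_cases hv : v ∈ H \ (T₀ ∪ 𝒞.biUnion F)
      · have hv0 : v ∈ H \ T₀ := by
          rw [Finset.mem_sdiff] at hv ⊢
          exact ⟨hv.1, fun h => hv.2 (Finset.mem_union_left _ h)⟩
        set C := (hfin v).toFinset with hCdef
        have hC𝒞 : C ∈ 𝒞 := Finset.mem_image.2 ⟨v, hv0, rfl⟩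
        have hsub : X.compIn (↑(H \ (T₀ ∪ 𝒞.biUnion F))) v ⊆ (↑(C \ F C) : Set V) := by
          intro x hx
          have hx1 : x ∈ (↑(H \ (T₀ ∪ 𝒞.biUnion F)) : Set V) := X.compIn_subset _ _ hx
          have hx2 : x ∈ X.compIn (↑(H \ T₀)) v := by
            refine X.compIn_mono ?_ v hx
            exact_mod_cast Finset.coe_subset.2
              (Finset.sdiff_subset_sdiff subset_rfl Finset.subset_union_left)
          have hxC : x ∈ C := (hfin v).mem_toFinset.2 hx2
          have hxT : x ∉ F C := by
            intro hmem
            have hxT' : x ∈ T₀ ∪ 𝒞.biUnion F :=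
              Finset.mem_union_right _ (Finset.mem_biUnion.2 ⟨C, hC𝒞, hmem⟩)
            exact (Finset.mem_sdiff.1 (Finset.mem_coe.1 hx1)).2 hxT'
          exact Finset.mem_coe.2 (Finset.mem_sdiff.2 ⟨hxC, hxT⟩)
        have hsub2 := X.compIn_subset_compIn hsub
        have hn : (X.compIn (↑(H \ (T₀ ∪ 𝒞.biUnion F))) v).ncard
            ≤ (X.compIn (↑(C \ F C)) v).ncard :=
          Set.ncard_le_ncard hsub2 ((C \ F C).finite_toSet.subset (X.compIn_subset _ _))
        have hb2 := (hF2 C (hCN C hC𝒞)).2 v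
        have hCcard : (C.card : ℝ) ≤ ε' * H.card := by
          have he : (X.compIn (↑(H \ T₀)) v).ncard = C.card :=
            Set.ncard_eq_toFinset_card _ (hfin v)
          rw [← he]
          exact hT₀comp v
        calc ((X.compIn (↑(H \ (T₀ ∪ 𝒞.biUnion F))) v).ncard : ℝ)
            ≤ ((X.compIn (↑(C \ F C)) v).ncard : ℝ) := by exact_mod_cast hn
          _ ≤ max b (ε' ^ (k + 1) * C.card) := hb2
          _ ≤ max b (ε' ^ (k + 1 + 1) * H.card) := by
              refine max_le_max le_rfl ?_
              calc ε' ^ (k + 1) * (C.card : ℝ)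
                  ≤ ε' ^ (k + 1) * (ε' * H.card) :=
                    mul_le_mul_of_nonneg_left hCcard (pow_nonneg h0.le _)
                _ = ε' ^ (k + 1 + 1) * H.card := by ring
      · have hv' : v ∉ (↑(H \ (T₀ ∪ 𝒞.biUnion F)) : Set V) := by simpa using hv
        rw [compIn_empty_of_not_mem X hv']
        simp only [Set.ncard_empty, Nat.cast_zero]
        exact le_max_of_le_left hb.le
end

lemma cut_le_sep {V : Type*} (X : SimpleGraph V) {ε ε' : ℝ} (hε : ε ∈ Set.Ioo (0:ℝ) 1)
    (hε' : ε' ∈ Set.Ioo (0:ℝ) 1) :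
    ∃ C : ℕ, 0 < C ∧ ∀ G : Finset V, cutEps X ε G ≤ C * sepEps X ε' G.card := by
  obtain ⟨k, hk⟩ := exists_pow_lt_of_lt_one hε.1 hε'.2
  refine ⟨⌈((k : ℝ) + 1) / ε⌉₊ + 1, Nat.succ_pos _, fun G => ?_⟩
  set N := G.card with hN
  set s := sepEps X ε' N with hsdef
  rcases Nat.eq_zero_or_pos N with h0 | hpos
  · exact le_trans (le_trans (cutEps_le_card X ε G) (le_of_eq h0)) (Nat.zero_le _)
  · have hNpos : (0:ℝ) < (N:ℝ) := by exact_mod_cast hpos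
    have hbpos : (0:ℝ) < ε * N := mul_pos hε.1 hNpos
    obtain ⟨T, hT1, hT2, hT3⟩ := key X hε'.1 hε'.2 hbpos N s
      (fun H hH => cutEps_le_sepEps X hH) k G le_rfl
    have hmax : max (ε * (N:ℝ)) (ε' ^ (k+1) * N) = ε * N := by
      apply max_eq_left
      have h5 : ε' ^ (k+1) ≤ ε' ^ k := pow_le_pow_of_le_one hε'.1.le hε'.2.le (Nat.le_succ k)
      exact mul_le_mul_of_nonneg_right (h5.trans hk.le) (Nat.cast_nonneg _)
    have hcut : cutEps X ε G ≤ T.card := by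
      apply Nat.sInf_le
      refine ⟨T, hT1, rfl, fun v => ?_⟩
      have := hT3 v
      rw [hmax] at this
      exact this
    have h5 : (T.card:ℝ) * ε ≤ (s:ℝ) * ((k:ℝ)+1) := by
      have h6 := hT2
      have h7 : ((T.card:ℝ) * ε) * (N:ℝ) ≤ ((s:ℝ) * ((k:ℝ)+1)) * (N:ℝ) := by
        calc ((T.card:ℝ) * ε) * (N:ℝ) = (T.card:ℝ) * (ε * N) := by ring
          _ ≤ (s:ℝ) * ((k:ℝ)+1) * N := h6
      exact le_of_mul_le_mul_right h7 hNpos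
    have hC : ((k:ℝ)+1)/ε ≤ ((⌈((k:ℝ)+1)/ε⌉₊ : ℝ) + 1) :=
      (Nat.le_ceil _).trans (by linarith)
    have h6 : (T.card:ℝ) ≤ (((⌈((k:ℝ)+1)/ε⌉₊ + 1) * s : ℕ) : ℝ) := by
      calc (T.card:ℝ) ≤ ((s:ℝ)*((k:ℝ)+1))/ε := (le_div_iff₀ hε.1).2 h5
        _ = (s:ℝ) * (((k:ℝ)+1)/ε) := by ring
        _ ≤ (s:ℝ) * ((⌈((k:ℝ)+1)/ε⌉₊ : ℝ) + 1) :=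
            mul_le_mul_of_nonneg_left hC (Nat.cast_nonneg _)
        _ = (((⌈((k:ℝ)+1)/ε⌉₊ + 1) * s : ℕ) : ℝ) := by push_cast; ring
    exact hcut.trans (Nat.cast_le.mp h6)


/-- For any `ε, ε' ∈ (0,1)` and any infinite bounded-degree graph `X`, the separation
profiles `sepᵉ_X` and `sepᵉ'_X` agree up to constants and a constant rescaling of `n`. -/
theorem sep_eps_independent {V : Type*} [Infinite V] (X : SimpleGraph V)
    (D : ℕ) (hdeg : ∀ v : V, (X.neighborSet v).Finite ∧ (X.neighborSet v).ncard ≤ D)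
    (ε ε' : ℝ) (hε : ε ∈ Set.Ioo (0 : ℝ) 1) (hε' : ε' ∈ Set.Ioo (0 : ℝ) 1) :
    ∃ C : ℕ, 0 < C ∧ ∀ n : ℕ,
      sepEps X ε n ≤ C * sepEps X ε' (C * n) ∧
      sepEps X ε' n ≤ C * sepEps X ε (C * n) := by
  obtain ⟨C₁, hC₁, h₁⟩ := cut_le_sep X hε hε'
  obtain ⟨C₂, hC₂, h₂⟩ := cut_le_sep X hε' hε
  refine ⟨C₁ + C₂, by positivity, fun n => ⟨?_, ?_⟩⟩
  · refine sepEps_le X (fun G hG => ?_)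
    refine (h₁ G).trans (Nat.mul_le_mul (Nat.le_add_right C₁ C₂) (sepEps_mono X ε' ?_))
    exact hG.trans (Nat.le_mul_of_pos_left n (by positivity))
  · refine sepEps_le X (fun G hG => ?_)
    refine (h₂ G).trans (Nat.mul_le_mul (Nat.le_add_left C₂ C₁) (sepEps_mono X ε ?_))
    exact hG.trans (Nat.le_mul_of_pos_left n (by positivity))
end
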